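/- Let G be the group presented by ⟨x, y | [x y⁻¹, x⁻¹ y x], [x y⁻¹, x⁻² y x²]⟩, i.e. the quotient of F₂ by the normal closure of the two relators [x y⁻¹, x⁻¹ y x] and [x y⁻¹, x⁻² y x²] (a presentation of Thompson's group F). Then the commutator subgroup G' of G is perfect: [G', G'] = G'. -/

import Mathlib

open scoped commutatorElement

/-- The two relators of the standard presentation of Thompson's group F:
`[x y⁻¹, x⁻¹ y x]` and `[x y⁻¹, x⁻² y x²]`. -/
def thompsonRels : Set (FreeGroup (Fin 2)) :=
  { ⁅FreeGroup.of (0 : Fin 2) * (FreeGroup.of (1 : Fin 2))⁻¹,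
      (FreeGroup.of (0 : Fin 2))⁻¹ * FreeGroup.of (1 : Fin 2) * FreeGroup.of (0 : Fin 2)⁆,
    ⁅FreeGroup.of (0 : Fin 2) * (FreeGroup.of (1 : Fin 2))⁻¹,
      (FreeGroup.of (0 : Fin 2) ^ 2)⁻¹ * FreeGroup.of (1 : Fin 2) * FreeGroup.of (0 : Fin 2) ^ 2⁆ }

/-!
Modulo `G''` the group becomes metabelian, so it suffices that a metabelian group generated by
two elements `a, b` satisfying the relations is abelian. View `Q'` additively as a module over
`ℤ[x^±1, y^±1]`, with `x, y` acting as conjugation by `a⁻¹, b⁻¹`; conjugation by elements of `Q'`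
is trivial. Up to such trivial conjugations the two relators are `c - y c + x c` and
`c + x c - x y c - y c + x² c`, where `c = ⁅a, b⁆`. The first gives `y c = c + x c`, which turns
the second into `-x c`; hence `c = 0`.
-/

section Metabelian

variable {Q : Type*} [Group Q]

theorem conj_eq_of_mem_commutator (hQ : ⁅commutator Q, commutator Q⁆ = ⊥) {g m : Q}
    (hg : g ∈ commutator Q) (hm : m ∈ commutator Q) : g * m * g⁻¹ = m := by
  have h := Subgroup.commutator_mem_commutator hg hm
  rw [hQ, Subgroup.mem_bot, commutatorElement_def] at h
  exact mul_inv_eq_one.mp h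

theorem commutatorElement_mem_commutator (a b : Q) : ⁅a, b⁆ ∈ commutator Q :=
  Subgroup.commutator_mem_commutator (Subgroup.mem_top a) (Subgroup.mem_top b)

theorem inv_mul_mul_mem_commutator {m : Q} (hm : m ∈ commutator Q) (g : Q) :
    g⁻¹ * m * g ∈ commutator Q :=
  Subgroup.Normal.conj_mem' inferInstance m hm g

theorem thompson_relator₁_eq (hQ : ⁅commutator Q, commutator Q⁆ = ⊥) (a b : Q) :
    ⁅a * b⁻¹, a⁻¹ * b * a⁆ = ⁅a, b⁆ * (b⁻¹ * ⁅a, b⁆ * b)⁻¹ * (a⁻¹ * ⁅a, b⁆ * a) := by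
  have hc := commutatorElement_mem_commutator a b
  calc ⁅a * b⁻¹, a⁻¹ * b * a⁆
      = ⁅a, b⁻¹⁆ * (⁅a, b⁆ * (b⁻¹ * ⁅a, b⁆ * b)⁻¹) * ⁅a, b⁻¹⁆⁻¹ * (a⁻¹ * ⁅a, b⁆ * a) := by
        simp only [commutatorElement_def]; group
    _ = ⁅a, b⁆ * (b⁻¹ * ⁅a, b⁆ * b)⁻¹ * (a⁻¹ * ⁅a, b⁆ * a) := by
        rw [conj_eq_of_mem_commutator hQ (commutatorElement_mem_commutator _ _)
          (mul_mem hc (inv_mem (inv_mul_mul_mem_commutator hc b)))]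

theorem thompson_relator₂_eq (hQ : ⁅commutator Q, commutator Q⁆ = ⊥) (a b : Q) :
    ⁅a * b⁻¹, (a ^ 2)⁻¹ * b * a ^ 2⁆ =
      ⁅a, b⁆ * (a⁻¹ * ⁅a, b⁆ * a) * ((b * a)⁻¹ * ⁅a, b⁆ * (b * a))⁻¹ *
        (b⁻¹ * ⁅a, b⁆ * b)⁻¹ * ((a ^ 2)⁻¹ * ⁅a, b⁆ * a ^ 2) := by
  have hc := commutatorElement_mem_commutator a b
  have hk : a * ⁅b⁻¹, (a ^ 2)⁻¹⁆ * a⁻¹ ∈ commutator Q := by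
    simpa using inv_mul_mul_mem_commutator (commutatorElement_mem_commutator b⁻¹ (a ^ 2)⁻¹) a⁻¹
  calc ⁅a * b⁻¹, (a ^ 2)⁻¹ * b * a ^ 2⁆
      = (a * ⁅b⁻¹, (a ^ 2)⁻¹⁆ * a⁻¹) *
            (⁅a, b⁆ * (a⁻¹ * ⁅a, b⁆ * a) * ((b * a)⁻¹ * ⁅a, b⁆ * (b * a))⁻¹) *
            (a * ⁅b⁻¹, (a ^ 2)⁻¹⁆ * a⁻¹)⁻¹ *
          (⁅a, b⁻¹⁆ * (b⁻¹ * ⁅a, b⁆ * b)⁻¹ * ⁅a, b⁻¹⁆⁻¹) * ((a ^ 2)⁻¹ * ⁅a, b⁆ * a ^ 2) := by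
        simp only [commutatorElement_def, sq, mul_assoc, mul_inv_rev, inv_inv,
          mul_inv_cancel_left, inv_mul_cancel_left]
    _ = ⁅a, b⁆ * (a⁻¹ * ⁅a, b⁆ * a) * ((b * a)⁻¹ * ⁅a, b⁆ * (b * a))⁻¹ *
          (b⁻¹ * ⁅a, b⁆ * b)⁻¹ * ((a ^ 2)⁻¹ * ⁅a, b⁆ * a ^ 2) := by
        rw [conj_eq_of_mem_commutator hQ (commutatorElement_mem_commutator _ _)
            (inv_mem (inv_mul_mul_mem_commutator hc b)),
          conj_eq_of_mem_commutator hQ hk (mul_mem (mul_mem hc (inv_mul_mul_mem_commutator hc a))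
            (inv_mem (inv_mul_mul_mem_commutator hc (b * a))))]

theorem commute_of_thompson_relators (hQ : ⁅commutator Q, commutator Q⁆ = ⊥) {a b : Q}
    (h₁ : ⁅a * b⁻¹, a⁻¹ * b * a⁆ = 1) (h₂ : ⁅a * b⁻¹, (a ^ 2)⁻¹ * b * a ^ 2⁆ = 1) :
    Commute a b := by
  rw [thompson_relator₁_eq hQ] at h₁
  rw [thompson_relator₂_eq hQ] at h₂
  set c := ⁅a, b⁆ with hc_def
  set p := a⁻¹ * c * a
  set s := (a ^ 2)⁻¹ * c * a ^ 2
  have hq : b⁻¹ * c * b = p * c := by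
    calc b⁻¹ * c * b = p * (c * (b⁻¹ * c * b)⁻¹ * p)⁻¹ * c := by group
      _ = p * c := by rw [h₁]; group
  have ht : (b * a)⁻¹ * c * (b * a) = s * p := by
    calc (b * a)⁻¹ * c * (b * a) = a⁻¹ * (b⁻¹ * c * b) * a := by group
      _ = s * p := by rw [hq]; simp only [p, s, sq]; group
  rw [hq, ht] at h₂
  have hs : c * s⁻¹ * c⁻¹ = s⁻¹ := by
    refine conj_eq_of_mem_commutator hQ (commutatorElement_mem_commutator a b) (inv_mem ?_)
    exact inv_mul_mul_mem_commutator (commutatorElement_mem_commutator a b) _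
  have hp : s⁻¹ * p⁻¹ * s⁻¹⁻¹ = 1 := by
    calc s⁻¹ * p⁻¹ * s⁻¹⁻¹ = c * s⁻¹ * c⁻¹ * p⁻¹ * s := by rw [hs, inv_inv]
      _ = c * p * (s * p)⁻¹ * (p * c)⁻¹ * s := by group
      _ = 1 := h₂
  rw [conj_eq_one_iff, inv_eq_one] at hp
  rw [← commutatorElement_eq_one_iff_commute, ← hc_def, ← conj_eq_one_iff (a := a⁻¹), inv_inv]
  exact hp

end Metabelian

theorem commutator_commutator_quotient_eq_bot (G : Type*) [Group G] :
    ⁅commutator (G ⧸ ⁅commutator G, commutator G⁆), commutator (G ⧸ ⁅commutator G, commutator G⁆)⁆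
      = ⊥ := by
  have := map_derivedSeries_eq (QuotientGroup.mk'_surjective (derivedSeries G 2)) 2
  rwa [QuotientGroup.map_mk'_self, eq_comm] at this

theorem PresentedGroup.isMulCommutative_of_surjective {α H : Type*} [Group H]
    {rels : Set (FreeGroup α)} (f : PresentedGroup rels →* H) (hf : Function.Surjective f)
    (hcomm : ∀ i j, Commute (f (.of i)) (f (.of j))) : IsMulCommutative H := by
  set S := Set.range (f ∘ PresentedGroup.of) with hS_def
  have hS : Subgroup.closure S = ⊤ := by
    rw [hS_def, Set.range_comp, ← MonoidHom.map_closure, PresentedGroup.closure_range_of,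
      ← MonoidHom.range_eq_map, MonoidHom.range_eq_top.2 hf]
  have hS_comm : ∀ x ∈ S, ∀ y ∈ S, x * y = y * x := by
    rintro _ ⟨i, rfl⟩ _ ⟨j, rfl⟩
    exact hcomm i j
  have hcentral (x : H) := Subgroup.closure_le_centralizer_centralizer S (hS ▸ Subgroup.mem_top x)
  exact .of_comm fun x y ↦
    Set.centralizer_centralizer_comm_of_comm hS_comm x (hcentral x) y (hcentral y)

theorem stmt_5 :
    ⁅commutator (PresentedGroup thompsonRels), commutator (PresentedGroup thompsonRels)⁆ =
      commutator (PresentedGroup thompsonRels) := by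
  set G := PresentedGroup thompsonRels
  set π := QuotientGroup.mk' ⁅commutator G, commutator G⁆
  refine le_antisymm (Subgroup.commutator_le_left _ _) ?_
  rw [← Subgroup.Normal.quotient_commutative_iff_commutator_le]
  have hrel {r} (hr : r ∈ thompsonRels) : π (PresentedGroup.mk _ r) = 1 := by
    rw [PresentedGroup.one_of_mem hr, map_one]
  have h₁ := hrel (Set.mem_insert _ _)
  have h₂ := hrel (Set.mem_insert_of_mem _ rfl)
  simp only [map_commutatorElement, map_mul, map_inv, map_pow] at h₁ h₂
  have hab : Commute (π (.of 0)) (π (.of 1)) :=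
    commute_of_thompson_relators (commutator_commutator_quotient_eq_bot G) h₁ h₂
  refine PresentedGroup.isMulCommutative_of_surjective π (QuotientGroup.mk'_surjective _) ?_
  intro i j
  fin_cases i <;> fin_cases j
  exacts [.refl _, hab, hab.symm, .refl _]
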